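/- Summary sufficiency (containment form): prove that the union of the four concatenation sets covers all target paths, i.e., Π(Vsrc, Vsink) ⊆ Π_SL(Vsrc, Vsink) ∪ Π_SL(Vsrc, Vap)·Π_IN(Vfp, Vsink) ∪ Π_OUT(Vsrc, Vfr)·Π_SL(Var, Vsink) ∪ Π_OUT(Vsrc, Vfr)·Π_SL(Var, Vap)·Π_IN(Vfp, Vsink), under the interprocedural graph model with stack-disciplined contexts, assuming every vertex of Vsrc and Vsink occurs only as endpoints and that every walk begins in Vsrc and ends in Vsink. -/

import Mathlib

/-- The set of (finite, nonempty) walks in the directed graph with edge relation `E`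
starting at a vertex of `V1` and ending at a vertex of `V2`. -/
def Walks {V : Type*} (E : V → V → Prop) (V1 V2 : Set V) : Set (List V) :=
  {l | l ≠ [] ∧ l.Chain' E ∧ (∃ a ∈ V1, l.head? = some a) ∧ ∃ b ∈ V2, l.getLast? = some b}

/-- Concatenation of two sets of walks: `A·B = { π1π2 : π1 ∈ A, π2 ∈ B,
(last π1, first π2) ∈ E }`. -/
def conc {V : Type*} (E : V → V → Prop) (A B : Set (List V)) : Set (List V) :=
  {l | ∃ p ∈ A, ∃ q ∈ B,
    (∃ a b, p.getLast? = some a ∧ q.head? = some b ∧ E a b) ∧ l = p ++ q}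

/-- Intra-procedural walks: all vertices share a single context. -/
def IPWalks {V C : Type*} (E : V → V → Prop) (ctx : V → C) (V1 V2 : Set V) :
    Set (List V) :=
  {l | l ∈ Walks E V1 V2 ∧ ∀ x ∈ l, ∀ y ∈ l, ctx x = ctx y}

/-- Same-level walks: the first and last vertices share the same context. -/
def SLWalks {V C : Type*} (E : V → V → Prop) (ctx : V → C) (V1 V2 : Set V) :
    Set (List V) :=
  {l | l ∈ Walks E V1 V2 ∧
    ∃ a b, l.head? = some a ∧ l.getLast? = some b ∧ ctx a = ctx b}

/-- Input walks under stack-disciplined contexts: the final context equals the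
initial one or is a proper extension of it (a callee context). -/
def INWalks {V F : Type*} (E : V → V → Prop) (ctx : V → List F)
    (V1 V2 : Set V) : Set (List V) :=
  {l | l ∈ Walks E V1 V2 ∧
    ∃ a b, l.head? = some a ∧ l.getLast? = some b ∧
      (ctx b = ctx a ∨ (ctx a <:+ ctx b ∧ ctx a ≠ ctx b))}

/-- Output walks under stack-disciplined contexts: the final context equals the
initial one or is a proper suffix of it (a caller context). -/
def OUTWalks {V F : Type*} (E : V → V → Prop) (ctx : V → List F)
    (V1 V2 : Set V) : Set (List V) :=
  {l | l ∈ Walks E V1 V2 ∧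
    ∃ a b, l.head? = some a ∧ l.getLast? = some b ∧
      (ctx b = ctx a ∨ (ctx b <:+ ctx a ∧ ctx b ≠ ctx a))}

/-!
A walk in `Π_SL ∪ Π_OUT · Π_SL` (`OUTSLWalks`) has come back from every call it made. The union
in the theorem is `OUTSL(Vsink) ∪ OUTSL(Vap) · Π_IN(Vfp, Vsink)`, and with `Vsink` replaced by the
current endpoint this cover is closed under appending an edge. An intra-procedural edge preserves
all context relations; a call edge opens the `Π_IN` part or extends it; a return edge either stays
inside the `Π_IN` part, or closes the call that opened it and the walk falls back into `OUTSL`.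
Appended to an `OUTSL` walk, a return edge makes the whole walk a `Π_OUT` part. Induction along
the walk gives the theorem.
-/

theorem isSuffix_iff_eq_or_strict {α : Type*} {s t : List α} :
    s <:+ t ↔ s = t ∨ (s <:+ t ∧ s ≠ t) :=
  ⟨fun h => (em (s = t)).imp id (⟨h, ·⟩),
    by rintro (rfl | ⟨h, -⟩) <;> [exact List.suffix_refl s; exact h]⟩

section Walks

variable {V : Type*} {E : V → V → Prop}

theorem walks_mono_right {V1 V2 V2' : Set V} (h : V2 ⊆ V2') : Walks E V1 V2 ⊆ Walks E V1 V2' :=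
  fun _ ⟨hne, hch, hhead, b, hb, hlast⟩ => ⟨hne, hch, hhead, b, h hb, hlast⟩

theorem mem_left_of_mem_walks {V1 V2 : Set V} {l : List V} {a : V} (hl : l ∈ Walks E V1 V2)
    (ha : l.head? = some a) : a ∈ V1 := by
  obtain ⟨-, -, ⟨a', ha', hla'⟩, -⟩ := hl
  obtain rfl : a' = a := Option.some_injective _ (hla'.symm.trans ha)
  exact ha'

theorem mem_right_of_mem_walks {V1 V2 : Set V} {l : List V} {b : V} (hl : l ∈ Walks E V1 V2)
    (hb : l.getLast? = some b) : b ∈ V2 := by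
  obtain ⟨-, -, -, b', hb', hlb'⟩ := hl
  obtain rfl : b' = b := Option.some_injective _ (hlb'.symm.trans hb)
  exact hb'

theorem singleton_mem_walks {V1 V2 : Set V} {x : V} (h1 : x ∈ V1) (h2 : x ∈ V2) :
    [x] ∈ Walks E V1 V2 :=
  ⟨List.cons_ne_nil _ _, List.isChain_singleton x, ⟨x, h1, rfl⟩, x, h2, rfl⟩

theorem append_mem_walks {V1 V2 V3 V4 : Set V} {p q : List V} {u w : V}
    (hp : p ∈ Walks E V1 V2) (hq : q ∈ Walks E V3 V4) (hu : p.getLast? = some u)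
    (hw : q.head? = some w) (huw : E u w) : p ++ q ∈ Walks E V1 V4 := by
  obtain ⟨hpne, hpch, ⟨a, ha, hpa⟩, -⟩ := hp
  obtain ⟨-, hqch, -, b, hb, hqb⟩ := hq
  refine ⟨by simp [hpne], hpch.append hqch ?_, ⟨a, ha, by simp [List.head?_append, hpa]⟩,
    b, hb, by simp [List.getLast?_append, hqb]⟩
  simpa [hu, hw] using huw

theorem walks_of_append_singleton {V1 V2 : Set V} {l : List V} {x : V}
    (h : l ++ [x] ∈ Walks E V1 V2) (hl : l ≠ []) :
    l ∈ Walks E V1 {l.getLast hl} ∧ E (l.getLast hl) x ∧ x ∈ V2 := by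
  obtain ⟨-, hch, ⟨a, ha, hhead⟩, b, hb, hlast⟩ := h
  obtain ⟨hlch, -, hjoin⟩ := List.isChain_append.1 hch
  obtain rfl : x = b := by simpa using hlast
  refine ⟨⟨hl, hlch, ⟨a, ha, by rwa [List.head?_append_of_ne_nil _ hl] at hhead⟩, _, rfl,
    List.getLast?_eq_some_getLast hl⟩, hjoin _ (List.getLast?_eq_some_getLast hl) x rfl, hb⟩

end Walks

section Summary

variable {V F : Type*} {E : V → V → Prop} {ctx : V → List F}

structure StackDisciplined (E : V → V → Prop) (ctx : V → List F) (Vfp Vap Vfr Var : Set V) :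
    Prop where
  call : ∀ u v, E u v → u ∈ Vap → v ∈ Vfp → ∃ f, ctx v = f :: ctx u
  ret : ∀ u v, E u v → u ∈ Vfr → v ∈ Var → ∃ f, ctx u = f :: ctx v
  intra : ∀ u v, E u v → ¬ (u ∈ Vap ∧ v ∈ Vfp) → ¬ (u ∈ Vfr ∧ v ∈ Var) →
    ctx u = ctx v

def OUTSLWalks (E : V → V → Prop) (ctx : V → List F) (Vsrc Vfr Var V2 : Set V) :
    Set (List V) :=
  SLWalks E ctx Vsrc V2 ∪ conc E (OUTWalks E ctx Vsrc Vfr) (SLWalks E ctx Var V2)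

def SummaryWalks (E : V → V → Prop) (ctx : V → List F) (Vsrc Vfp Vap Vfr Var V2 : Set V) :
    Set (List V) :=
  OUTSLWalks E ctx Vsrc Vfr Var V2 ∪
    conc E (OUTSLWalks E ctx Vsrc Vfr Var Vap) (INWalks E ctx Vfp V2)

variable {Vsrc Vfp Vap Vfr Var : Set V}

theorem StackDisciplined.edge_cases (hG : StackDisciplined E ctx Vfp Vap Vfr Var) {u v : V}
    (h : E u v) :
    (u ∈ Vap ∧ v ∈ Vfp ∧ ∃ f, ctx v = f :: ctx u) ∨
      (u ∈ Vfr ∧ v ∈ Var ∧ ∃ f, ctx u = f :: ctx v) ∨ ctx u = ctx v := by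
  by_cases hc : u ∈ Vap ∧ v ∈ Vfp
  · exact Or.inl ⟨hc.1, hc.2, hG.call u v h hc.1 hc.2⟩
  by_cases hr : u ∈ Vfr ∧ v ∈ Var
  · exact Or.inr (Or.inl ⟨hr.1, hr.2, hG.ret u v h hr.1 hr.2⟩)
  exact Or.inr (Or.inr (hG.intra u v h hc hr))

theorem mem_inWalks_iff {V1 V2 : Set V} {l : List V} :
    l ∈ INWalks E ctx V1 V2 ↔ l ∈ Walks E V1 V2 ∧
      ∃ a b, l.head? = some a ∧ l.getLast? = some b ∧ ctx a <:+ ctx b := by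
  refine and_congr_right fun _ => exists₂_congr fun a b =>
    and_congr_right fun _ => and_congr_right fun _ => ?_
  rw [eq_comm, ← isSuffix_iff_eq_or_strict]

theorem mem_outWalks_iff {V1 V2 : Set V} {l : List V} :
    l ∈ OUTWalks E ctx V1 V2 ↔ l ∈ Walks E V1 V2 ∧
      ∃ a b, l.head? = some a ∧ l.getLast? = some b ∧ ctx b <:+ ctx a := by
  refine and_congr_right fun _ => exists₂_congr fun a b =>
    and_congr_right fun _ => and_congr_right fun _ => ?_
  rw [← isSuffix_iff_eq_or_strict]

theorem slWalks_mono_right {V1 V2 V2' : Set V} (h : V2 ⊆ V2') :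
    SLWalks E ctx V1 V2 ⊆ SLWalks E ctx V1 V2' :=
  fun _ hl => ⟨walks_mono_right h hl.1, hl.2⟩

theorem conc_mono_right {A B B' : Set (List V)} (h : B ⊆ B') : conc E A B ⊆ conc E A B' :=
  fun _ ⟨p, hp, q, hq, hpq, hl⟩ => ⟨p, hp, q, h hq, hpq, hl⟩

theorem conc_union_left (A B C : Set (List V)) :
    conc E (A ∪ B) C = conc E A C ∪ conc E B C := by
  ext l
  simp only [conc, Set.mem_union, Set.mem_ofPred_eq, or_and_right, exists_or]

theorem outSLWalks_mono_right {V2 V2' : Set V} (h : V2 ⊆ V2') :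
    OUTSLWalks E ctx Vsrc Vfr Var V2 ⊆ OUTSLWalks E ctx Vsrc Vfr Var V2' :=
  Set.union_subset_union (slWalks_mono_right h) (conc_mono_right (slWalks_mono_right h))

theorem outSLWalks_subset_outWalks (hG : StackDisciplined E ctx Vfp Vap Vfr Var) {V2 : Set V} :
    OUTSLWalks E ctx Vsrc Vfr Var V2 ⊆ OUTWalks E ctx Vsrc V2 := by
  rintro l (⟨hl, a, b, ha, hb, hab⟩ |
    ⟨p, hp, q, ⟨hq, w', b, hw', hb, hwb⟩, ⟨u, w, hu, hw, huw⟩, rfl⟩)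
  · exact mem_outWalks_iff.2 ⟨hl, a, b, ha, hb, hab ▸ List.suffix_refl _⟩
  obtain ⟨hp, a, u', ha, hu', hua⟩ := mem_outWalks_iff.1 hp
  obtain rfl : u = u' := Option.some_injective _ (hu.symm.trans hu')
  obtain rfl : w = w' := Option.some_injective _ (hw.symm.trans hw')
  obtain ⟨f, hf⟩ := hG.ret u w huw (mem_right_of_mem_walks hp hu) (mem_left_of_mem_walks hq hw)
  refine mem_outWalks_iff.2 ⟨append_mem_walks hp hq hu hw huw, a, b,
    by simp [List.head?_append, ha], by simp [List.getLast?_append, hb], ?_⟩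
  calc ctx b = ctx w := hwb.symm
    _ <:+ ctx u := hf ▸ List.suffix_cons f _
    _ <:+ ctx a := hua

theorem outSLWalks_append_of_ctx_eq {V2 V3 V4 : Set V} {p r : List V} {u w b : V}
    (hp : p ∈ OUTSLWalks E ctx Vsrc Vfr Var V2) (hu : p.getLast? = some u)
    (hr : r ∈ Walks E V3 V4) (hw : r.head? = some w) (huw : E u w)
    (hb : r.getLast? = some b) (hub : ctx b = ctx u) :
    p ++ r ∈ OUTSLWalks E ctx Vsrc Vfr Var V4 := by
  rcases hp with ⟨hp, a, u', ha, hu', hau⟩ |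
    ⟨p₁, hp₁, p₂, ⟨hp₂, w₂, u', hw₂, hu', hwu⟩, hjoin, rfl⟩
  · obtain rfl : u = u' := Option.some_injective _ (hu.symm.trans hu')
    exact Or.inl ⟨append_mem_walks hp hr hu hw huw, a, b, by simp [List.head?_append, ha],
      by simp [List.getLast?_append, hb], hau.trans hub.symm⟩
  · obtain rfl : u = u' := by simpa [List.getLast?_append, hu'] using hu.symm
    obtain ⟨u₁, w₁, hu₁, hw₁, hjoin⟩ := hjoin
    refine List.append_assoc p₁ p₂ r ▸ Or.inr ⟨p₁, hp₁, p₂ ++ r,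
      ⟨append_mem_walks hp₂ hr hu' hw huw, w₂, b, by simp [List.head?_append, hw₂],
        by simp [List.getLast?_append, hb], hwu.trans hub.symm⟩,
      ⟨u₁, w₁, hu₁, by simp [List.head?_append, hw₁], hjoin⟩, rfl⟩

variable {l : List V} {v x : V} {V3 : Set V}

theorem outSLWalks_snoc (hG : StackDisciplined E ctx Vfp Vap Vfr Var)
    (hl : l ∈ OUTSLWalks E ctx Vsrc Vfr Var {v}) (hv : l.getLast? = some v) (hvx : E v x)
    (hx : x ∈ V3) : l ++ [x] ∈ SummaryWalks E ctx Vsrc Vfp Vap Vfr Var V3 := by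
  rcases hG.edge_cases hvx with ⟨hvap, hxfp, -⟩ | ⟨hvfr, hxar, -⟩ | hvx'
  · exact Or.inr ⟨l, outSLWalks_mono_right (Set.singleton_subset_iff.2 hvap) hl, [x],
      mem_inWalks_iff.2 ⟨singleton_mem_walks hxfp hx, x, x, rfl, rfl, List.suffix_refl _⟩,
      ⟨v, x, hv, rfl, hvx⟩, rfl⟩
  · exact Or.inl (Or.inr ⟨l,
      outSLWalks_subset_outWalks hG (outSLWalks_mono_right (Set.singleton_subset_iff.2 hvfr) hl),
      [x], ⟨singleton_mem_walks hxar hx, x, x, rfl, rfl, rfl⟩, ⟨v, x, hv, rfl, hvx⟩, rfl⟩)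
  · exact Or.inl (outSLWalks_append_of_ctx_eq hl hv (singleton_mem_walks (Set.mem_univ x) hx)
      rfl hvx rfl hvx'.symm)

theorem conc_outSLWalks_inWalks_snoc (hG : StackDisciplined E ctx Vfp Vap Vfr Var)
    (hl : l ∈ conc E (OUTSLWalks E ctx Vsrc Vfr Var Vap) (INWalks E ctx Vfp {v}))
    (hv : l.getLast? = some v) (hvx : E v x) (hx : x ∈ V3) :
    l ++ [x] ∈ SummaryWalks E ctx Vsrc Vfp Vap Vfr Var V3 := by
  obtain ⟨p, hp, q, hq, ⟨u, w, hu, hw, huw⟩, rfl⟩ := hl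
  obtain ⟨hq, w', v', hw', hv', hwv⟩ := mem_inWalks_iff.1 hq
  obtain rfl : w = w' := Option.some_injective _ (hw.symm.trans hw')
  obtain rfl : v = v' := by simpa [List.getLast?_append, hv'] using hv.symm
  have hqx : q ++ [x] ∈ Walks E Vfp V3 :=
    append_mem_walks hq (singleton_mem_walks (Set.mem_univ x) hx) hv' rfl hvx
  have hpending : ctx w <:+ ctx x ∨ ctx x = ctx u := by
    rcases hG.edge_cases hvx with ⟨-, -, f, hf⟩ | ⟨-, -, f, hf⟩ | hvx'
    · exact Or.inl (hwv.trans (hf ▸ List.suffix_cons f _))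
    · rcases List.suffix_cons_iff.1 (hf ▸ hwv) with hret | hsuffix
      · obtain ⟨g, hg⟩ := hG.call u w huw
          (mem_right_of_mem_walks (outSLWalks_subset_outWalks hG hp).1 hu)
          (mem_left_of_mem_walks hq hw)
        exact Or.inr (List.cons_eq_cons.1 (hg.symm.trans hret)).2.symm
      · exact Or.inl hsuffix
    · exact Or.inl (hvx' ▸ hwv)
  rcases hpending with hpending | hreturned
  · exact Or.inr ⟨p, hp, q ++ [x], mem_inWalks_iff.2 ⟨hqx, w, x,
      by simp [List.head?_append, hw], by simp, hpending⟩,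
      ⟨u, w, hu, by simp [List.head?_append, hw], huw⟩, List.append_assoc p q [x]⟩
  · exact List.append_assoc p q [x] ▸ Or.inl (outSLWalks_append_of_ctx_eq hp hu hqx
      (by simp [List.head?_append, hw]) huw (by simp) hreturned)

theorem summaryWalks_snoc (hG : StackDisciplined E ctx Vfp Vap Vfr Var)
    (hl : l ∈ SummaryWalks E ctx Vsrc Vfp Vap Vfr Var {v}) (hv : l.getLast? = some v)
    (hvx : E v x) (hx : x ∈ V3) : l ++ [x] ∈ SummaryWalks E ctx Vsrc Vfp Vap Vfr Var V3 :=
  hl.elim (outSLWalks_snoc hG · hv hvx hx) (conc_outSLWalks_inWalks_snoc hG · hv hvx hx)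

theorem mem_summaryWalks_of_mem_walks (hG : StackDisciplined E ctx Vfp Vap Vfr Var)
    {V2 : Set V} (hl : l ∈ Walks E Vsrc V2) :
    l ∈ SummaryWalks E ctx Vsrc Vfp Vap Vfr Var V2 := by
  induction l using List.reverseRecOn generalizing V2 with
  | nil => exact absurd rfl hl.1
  | append_singleton l x ih =>
    rcases eq_or_ne l [] with rfl | hne
    · exact Or.inl (Or.inl ⟨hl, x, x, rfl, rfl, rfl⟩)
    obtain ⟨hlw, hvx, hx⟩ := walks_of_append_singleton hl hne
    exact summaryWalks_snoc hG (ih hlw) (List.getLast?_eq_some_getLast hne) hvx hx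

end Summary

theorem summary_sufficiency_general {V F : Type*} (E : V → V → Prop) (ctx : V → List F)
    (Vsrc Vsink Vfp Vap Vfr Var : Set V)
    (hcall : ∀ u v, E u v → u ∈ Vap → v ∈ Vfp → ∃ f, ctx v = f :: ctx u)
    (hret : ∀ u v, E u v → u ∈ Vfr → v ∈ Var → ∃ f, ctx u = f :: ctx v)
    (hintra : ∀ u v, E u v → ¬ (u ∈ Vap ∧ v ∈ Vfp) → ¬ (u ∈ Vfr ∧ v ∈ Var) →
      ctx u = ctx v) :
    ∀ l ∈ Walks E Vsrc Vsink,
      (∀ x ∈ l.tail.dropLast, x ∉ Vsrc ∪ Vsink) →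
      l ∈ SLWalks E ctx Vsrc Vsink ∪
        conc E (SLWalks E ctx Vsrc Vap) (INWalks E ctx Vfp Vsink) ∪
        conc E (OUTWalks E ctx Vsrc Vfr) (SLWalks E ctx Var Vsink) ∪
        conc E (conc E (OUTWalks E ctx Vsrc Vfr) (SLWalks E ctx Var Vap))
          (INWalks E ctx Vfp Vsink) := by
  intro l hl _
  have hcover := mem_summaryWalks_of_mem_walks ⟨hcall, hret, hintra⟩ hl
  simp only [SummaryWalks, OUTSLWalks, conc_union_left, Set.mem_union] at hcover ⊢
  tauto

/-- Summary sufficiency (containment form, Theorem 1 / Lemma 4 ⊆ direction):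
every source-to-sink walk whose interior vertices avoid `Vsrc ∪ Vsink` lies in
the union of the four concatenation sets. -/
theorem summary_sufficiency {V F : Type*} (E : V → V → Prop) (ctx : V → List F)
    (Vsrc Vsink Vfp Vap Vfr Var : Set V)
    (hcall : ∀ u v, E u v → u ∈ Vap → v ∈ Vfp → ∃ f, ctx v = f :: ctx u)
    (hret : ∀ u v, E u v → u ∈ Vfr → v ∈ Var → ∃ f, ctx u = f :: ctx v)
    (hcall_only : ∀ u v, E u v → (∃ f, ctx v = f :: ctx u) → u ∈ Vap ∧ v ∈ Vfp)
    (hret_only : ∀ u v, E u v → (∃ f, ctx u = f :: ctx v) → u ∈ Vfr ∧ v ∈ Var)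
    (hintra : ∀ u v, E u v → ¬ (u ∈ Vap ∧ v ∈ Vfp) → ¬ (u ∈ Vfr ∧ v ∈ Var) →
      ctx u = ctx v) :
    ∀ l ∈ Walks E Vsrc Vsink,
      (∀ x ∈ l.tail.dropLast, x ∉ Vsrc ∪ Vsink) →
      l ∈ SLWalks E ctx Vsrc Vsink ∪
        conc E (SLWalks E ctx Vsrc Vap) (INWalks E ctx Vfp Vsink) ∪
        conc E (OUTWalks E ctx Vsrc Vfr) (SLWalks E ctx Var Vsink) ∪
        conc E (conc E (OUTWalks E ctx Vsrc Vfr) (SLWalks E ctx Var Vap))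
          (INWalks E ctx Vfp Vsink) :=
  summary_sufficiency_general E ctx Vsrc Vsink Vfp Vap Vfr Var hcall hret hintra
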